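/- For any depth-1 formula φ of TL[#←,PNP]_1 or of TL[#←,#→,PNP]_1 and any affix restriction (λ,ϱ) with |ϱ(n)| ≥ 1 for all n ∈ ℕ^{|Σ|}, if all PNPs occurring in φ are constant on the middle of (λ,ϱ), then the language L(φ) defined by φ is commutative on the middle of (λ,ϱ). -/
import Mathlib


mutual
  /-- Formulas of TL[#←,#→,PNP]: TL with counting extended with Parikh numerical
  predicates as additional depth-0 atomic formulas.  A PNP is given by a function
  `(σ → ℕ) → ℕ → Bool` taking the Parikh vector of the string and the position. -/
  inductive PFormula (σ : Type) : Type
    | sym : σ → PFormula σ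
    | pnp : ((σ → ℕ) → ℕ → Bool) → PFormula σ
    | lt : PTerm σ → PTerm σ → PFormula σ
    | not : PFormula σ → PFormula σ
    | and : PFormula σ → PFormula σ → PFormula σ
  /-- Terms of TL[#←,#→,PNP]. -/
  inductive PTerm (σ : Type) : Type
    | countL : PFormula σ → PTerm σ
    | countR : PFormula σ → PTerm σ
    | add : PTerm σ → PTerm σ → PTerm σ
    | one : PTerm σ
end

/-- The Parikh vector of `w`: the number of occurrences of each symbol. -/
def parikh {σ : Type} [DecidableEq σ] (w : List σ) : σ → ℕ := fun c => w.count c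

mutual
  /-- Satisfaction `w,i ⊨ φ` (positions are 0-indexed, `0 ≤ i < |w|`);
  a PNP `π` holds at position `i` of `w` iff `π (Ψ(w)) i = true`. -/
  def PFormula.sat {σ : Type} [DecidableEq σ] : PFormula σ → List σ → ℕ → Bool
    | .sym c, w, i => decide (w[i]? = some c)
    | .pnp π, w, i => π (parikh w) i
    | .lt t₁ t₂, w, i => decide (PTerm.val t₁ w i < PTerm.val t₂ w i)
    | .not φ, w, i => !(PFormula.sat φ w i)
    | .and φ₁ φ₂, w, i => PFormula.sat φ₁ w i && PFormula.sat φ₂ w i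
  /-- Value `t^{w,i}`: `#←[φ]` counts positions `j ≤ i` satisfying `φ`, and
  `#→[φ]` counts positions `i ≤ j < |w|` satisfying `φ`. -/
  def PTerm.val {σ : Type} [DecidableEq σ] : PTerm σ → List σ → ℕ → ℕ
    | .countL φ, w, i => ((List.range (i + 1)).filter (fun j => PFormula.sat φ w j)).length
    | .countR φ, w, i =>
        ((List.range w.length).filter (fun j => decide (i ≤ j) && PFormula.sat φ w j)).length
    | .add t₁ t₂, w, i => PTerm.val t₁ w i + PTerm.val t₂ w i
    | .one, _, _ => 1
end

mutual
  /-- Nesting depth of `#←`/`#→` in a formula. -/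
  def PFormula.depth {σ : Type} : PFormula σ → ℕ
    | .sym _ => 0
    | .pnp _ => 0
    | .lt t₁ t₂ => max (PTerm.depth t₁) (PTerm.depth t₂)
    | .not φ => PFormula.depth φ
    | .and φ₁ φ₂ => max (PFormula.depth φ₁) (PFormula.depth φ₂)
  /-- Nesting depth of `#←`/`#→` in a term. -/
  def PTerm.depth {σ : Type} : PTerm σ → ℕ
    | .countL φ => PFormula.depth φ + 1
    | .countR φ => PFormula.depth φ + 1
    | .add t₁ t₂ => max (PTerm.depth t₁) (PTerm.depth t₂)
    | .one => 0
end

mutual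
  /-- A formula lies in TL[#←,PNP] (no `#→`). -/
  def PFormula.noCountR {σ : Type} : PFormula σ → Prop
    | .sym _ => True
    | .pnp _ => True
    | .lt t₁ t₂ => PTerm.noCountR t₁ ∧ PTerm.noCountR t₂
    | .not φ => PFormula.noCountR φ
    | .and φ₁ φ₂ => PFormula.noCountR φ₁ ∧ PFormula.noCountR φ₂
  /-- A term lies in TL[#←,PNP] (no `#→`). -/
  def PTerm.noCountR {σ : Type} : PTerm σ → Prop
    | .countL φ => PFormula.noCountR φ
    | .countR _ => False
    | .add t₁ t₂ => PTerm.noCountR t₁ ∧ PTerm.noCountR t₂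
    | .one => True
end

mutual
  /-- The list of all subformulas of a formula (including itself). -/
  def PFormula.subs {σ : Type} : PFormula σ → List (PFormula σ)
    | .sym c => [.sym c]
    | .pnp π => [.pnp π]
    | .lt t₁ t₂ => .lt t₁ t₂ :: (PTerm.subs t₁ ++ PTerm.subs t₂)
    | .not φ => .not φ :: PFormula.subs φ
    | .and φ₁ φ₂ => .and φ₁ φ₂ :: (PFormula.subs φ₁ ++ PFormula.subs φ₂)
  /-- The list of all subformulas occurring in a term. -/
  def PTerm.subs {σ : Type} : PTerm σ → List (PFormula σ)
    | .countL φ => PFormula.subs φ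
    | .countR φ => PFormula.subs φ
    | .add t₁ t₂ => PTerm.subs t₁ ++ PTerm.subs t₂
    | .one => []
end

/-- The PNPs occurring in a formula. -/
def PFormula.pnps {σ : Type} (φ : PFormula σ) : Set ((σ → ℕ) → ℕ → Bool) :=
  {π | PFormula.pnp π ∈ φ.subs}

/-- A minimal depth-1 formula: a comparison of terms, of depth 1, containing no other
depth-1 formula as a subformula. -/
def IsMinimalDepth1 {σ : Type} (ψ : PFormula σ) : Prop :=
  ψ.depth = 1 ∧ (∃ t₁ t₂ : PTerm σ, ψ = .lt t₁ t₂) ∧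
    ∀ χ ∈ ψ.subs, χ = ψ ∨ PFormula.depth χ = 0

/-- An interval `[u,v]` in `ℕ^{|Σ|}`, given by its endpoints. -/
def intervalSet {σ : Type} (I : (σ → ℕ) × (σ → ℕ)) : Set (σ → ℕ) :=
  Set.Icc I.1 I.2

/-- A family of intervals is accommodating if it contains intervals of arbitrarily
large size. -/
def Accommodating {σ : Type} (I : (σ → ℕ) → (σ → ℕ) × (σ → ℕ)) : Prop :=
  ∀ sz : σ → ℕ, ∃ n : σ → ℕ, (I n).1 + sz ≤ (I n).2

/-- `φ` is constant on the family of intervals `I`: its truth value at a position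
depends only on the Parikh vector of the whole string, for positions whose prefix
Parikh vector lies in the interval assigned to that Parikh vector. -/
def ConstantOn {σ : Type} [DecidableEq σ] (φ : PFormula σ)
    (I : (σ → ℕ) → (σ → ℕ) × (σ → ℕ)) : Prop :=
  ∀ n : σ → ℕ, ∀ w w' : List σ, parikh w = n → parikh w' = n →
    ∀ i i' : ℕ, i < w.length → i' < w'.length →
      parikh (w.take (i + 1)) ∈ intervalSet (I n) →
      parikh (w'.take (i' + 1)) ∈ intervalSet (I n) →
      (φ.sat w i = true ↔ φ.sat w' i' = true)

/-- Membership in the affix restriction `(λ, ϱ)`: `w` factors as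
`λ(Ψ(w)) · w' · ϱ(Ψ(w))`. -/
def InAffix {σ : Type} [DecidableEq σ] (lam rho : (σ → ℕ) → List σ) (w : List σ) : Prop :=
  ∃ w' : List σ, w = lam (parikh w) ++ w' ++ rho (parikh w)

/-- The restriction `_λ L_ϱ` of a language to the affix restriction `(λ, ϱ)`. -/
def affixRestrict {σ : Type} [DecidableEq σ] (L : Set (List σ))
    (lam rho : (σ → ℕ) → List σ) : Set (List σ) :=
  {w ∈ L | InAffix lam rho w}

/-- The middle of the affix restriction `(λ, ϱ)`: the family of intervals
`n ↦ [Ψ(λ(n)), n − Ψ(ϱ(n))]` (subtraction coordinatewise). -/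
def middle {σ : Type} [DecidableEq σ] (lam rho : (σ → ℕ) → List σ) :
    (σ → ℕ) → (σ → ℕ) × (σ → ℕ) :=
  fun n => (parikh (lam n), n - parikh (rho n))

/-- `L` is commutative on the middle of `(λ, ϱ)`: strings respecting the affix
restriction with equal Parikh vectors are not distinguished by `L`. -/
def CommutativeOnMiddle {σ : Type} [DecidableEq σ] (L : Set (List σ))
    (lam rho : (σ → ℕ) → List σ) : Prop :=
  ∀ w w' : List σ, InAffix lam rho w → InAffix lam rho w' → parikh w = parikh w' →
    (w ∈ L ↔ w' ∈ L)

/-- The language defined by `φ` (satisfaction at the last position; only nonempty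
strings can be members). -/
def PFormula.lang {σ : Type} [DecidableEq σ] (φ : PFormula σ) : Set (List σ) :=
  {w | w ≠ [] ∧ φ.sat w (w.length - 1) = true}

namespace StmtAux

variable {σ : Type} [DecidableEq σ]

/-- Value of a depth-0 term (independent of string and position). -/
def pevalT : PTerm σ → ℕ
  | .countL _ => 0
  | .countR _ => 0
  | .add t₁ t₂ => pevalT t₁ + pevalT t₂
  | .one => 1

/-- Evaluation of a depth-0 formula given the symbol at the position and a
valuation of the PNPs. -/
def pevalF (V : ((σ → ℕ) → ℕ → Bool) → Bool) (s : Option σ) : PFormula σ → Bool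
  | .sym c => decide (s = some c)
  | .pnp π => V π
  | .lt t₁ t₂ => decide (pevalT t₁ < pevalT t₂)
  | .not ψ => !(pevalF V s ψ)
  | .and ψ₁ ψ₂ => pevalF V s ψ₁ && pevalF V s ψ₂

theorem val_depth0 : ∀ (t : PTerm σ), t.depth = 0 → ∀ (w : List σ) (i : ℕ),
    t.val w i = pevalT t
  | .countL ψ, ht, w, i => by simp [PTerm.depth] at ht
  | .countR ψ, ht, w, i => by simp [PTerm.depth] at ht
  | .add t₁ t₂, ht, w, i => by
      simp only [PTerm.depth, Nat.max_eq_zero_iff] at ht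
      simp only [PTerm.val, pevalT, val_depth0 t₁ ht.1 w i, val_depth0 t₂ ht.2 w i]
  | .one, _, w, i => rfl

theorem sat_depth0 : ∀ (ψ : PFormula σ), ψ.depth = 0 →
    ∀ (V : ((σ → ℕ) → ℕ → Bool) → Bool) (w : List σ) (i : ℕ),
    (∀ π, PFormula.pnp π ∈ ψ.subs → π (parikh w) i = V π) →
    ψ.sat w i = pevalF V w[i]? ψ
  | .sym c, _, V, w, i, _ => by simp [PFormula.sat, pevalF]
  | .pnp π, _, V, w, i, hp => by
      simpa [PFormula.sat, pevalF] using hp π (by simp [PFormula.subs])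
  | .lt t₁ t₂, hd, V, w, i, hp => by
      simp only [PFormula.depth, Nat.max_eq_zero_iff] at hd
      simp only [PFormula.sat, pevalF, val_depth0 t₁ hd.1 w i, val_depth0 t₂ hd.2 w i]
  | .not ψ, hd, V, w, i, hp => by
      have hd' : ψ.depth = 0 := by simpa [PFormula.depth] using hd
      simp only [PFormula.sat, pevalF]
      rw [sat_depth0 ψ hd' V w i (fun π h => hp π (by
        simp only [PFormula.subs, List.mem_cons]; exact Or.inr h))]
  | .and ψ₁ ψ₂, hd, V, w, i, hp => by
      simp only [PFormula.depth, Nat.max_eq_zero_iff] at hd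
      simp only [PFormula.sat, pevalF]
      rw [sat_depth0 ψ₁ hd.1 V w i (fun π h => hp π (by
            simp only [PFormula.subs, List.mem_cons, List.mem_append]
            exact Or.inr (Or.inl h))),
          sat_depth0 ψ₂ hd.2 V w i (fun π h => hp π (by
            simp only [PFormula.subs, List.mem_cons, List.mem_append]
            exact Or.inr (Or.inr h)))]

theorem sat_congr (ψ : PFormula σ) (hd : ψ.depth = 0) (w w' : List σ) (i i' : ℕ)
    (hs : w[i]? = w'[i']?)
    (hp : ∀ π, PFormula.pnp π ∈ ψ.subs → π (parikh w) i = π (parikh w') i') :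
    ψ.sat w i = ψ.sat w' i' := by
  rw [sat_depth0 ψ hd (fun π => π (parikh w) i) w i (fun π _ => rfl),
      sat_depth0 ψ hd (fun π => π (parikh w) i) w' i' (fun π h => (hp π h).symm), hs]

theorem filter_range_len (p : ℕ → Bool) (m : ℕ) :
    ((List.range m).filter p).length = ∑ j ∈ Finset.range m, (if p j then 1 else 0) := by
  induction m with
  | zero => simp
  | succ m ih =>
      rw [List.range_succ, List.filter_append, List.length_append, ih,
        Finset.sum_range_succ]
      by_cases h : p m <;> simp [h]

theorem sum_getElem? {α : Type} (q : Option α → Bool) : ∀ (l : List α),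
    (∑ k ∈ Finset.range l.length, if q l[k]? then 1 else 0) =
      List.countP (fun c => q (some c)) l
  | [] => by simp
  | c :: t => by
      rw [List.length_cons, Finset.sum_range_succ']
      simp only [List.getElem?_cons_succ, List.getElem?_cons_zero]
      rw [sum_getElem? q t, List.countP_cons]

theorem mem_mid (a u r : List σ) (j : ℕ) (hA : a.length ≤ j)
    (hj : j + 1 ≤ a.length + u.length) :
    parikh ((a ++ u ++ r).take (j+1)) ∈
      Set.Icc (parikh a) (parikh (a ++ u ++ r) - parikh r) := by
  have htake : (a ++ u ++ r).take (j+1) = a ++ u.take (j+1 - a.length) := by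
    rw [List.append_assoc, List.take_append,
      List.take_of_length_le (by omega), List.take_append,
      show (j+1 - a.length) - u.length = 0 by omega, List.take_zero, List.append_nil]
  rw [htake, Set.mem_Icc]
  constructor
  · intro c
    simp [parikh, List.count_append]
  · intro c
    have h1 : List.count c (u.take (j+1 - a.length)) ≤ List.count c u :=
      (List.take_sublist _ _).count_le c
    simp only [parikh, Pi.sub_apply, List.count_append]
    omega

mutual
theorem auxT (φ : PFormula σ) (w w' : List σ) (L : ℕ) (hL : 1 ≤ L)
    (hw : w.length = L) (hw' : w'.length = L)
    (hC : ∀ ψ : PFormula σ, ψ.depth = 0 →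
      (∀ π, PFormula.pnp π ∈ ψ.subs → PFormula.pnp π ∈ φ.subs) →
      ((List.range L).filter (fun j => ψ.sat w j)).length =
      ((List.range L).filter (fun j => ψ.sat w' j)).length)
    (h0 : ∀ ψ : PFormula σ, ψ.depth = 0 →
      (∀ π, PFormula.pnp π ∈ ψ.subs → PFormula.pnp π ∈ φ.subs) →
      ψ.sat w (L-1) = ψ.sat w' (L-1)) :
    ∀ t : PTerm σ, t.depth ≤ 1 →
      (∀ π, PFormula.pnp π ∈ t.subs → PFormula.pnp π ∈ φ.subs) →
      t.val w (L-1) = t.val w' (L-1)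
  | .countL ψ, hd, hs => by
      have hd0 : ψ.depth = 0 := by simp only [PTerm.depth] at hd; omega
      have hL1 : L - 1 + 1 = L := by omega
      simp only [PTerm.val, hL1, hw, hw']
      exact hC ψ hd0 (fun π h => hs π h)
  | .countR ψ, hd, hs => by
      have hd0 : ψ.depth = 0 := by simp only [PTerm.depth] at hd; omega
      have key : ∀ (v : List σ), v.length = L →
          PTerm.val (.countR ψ) v (L-1) = (if ψ.sat v (L-1) then 1 else 0) := by
        intro v hv
        obtain ⟨m, rfl⟩ : ∃ m, L = m + 1 := ⟨L-1, by omega⟩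
        simp only [PTerm.val, hv, Nat.add_sub_cancel]
        rw [List.range_succ, List.filter_append]
        have h1 : (List.range m).filter (fun j => decide (m ≤ j) && ψ.sat v j) = [] := by
          rw [List.filter_eq_nil_iff]
          intro j hj
          simp only [List.mem_range] at hj
          simp [Nat.not_le.mpr hj]
        rw [h1]
        by_cases h : ψ.sat v m <;> simp [h]
      rw [key w hw, key w' hw', h0 ψ hd0 (fun π h => hs π h)]
  | .add t₁ t₂, hd, hs => by
      simp only [PTerm.depth, max_le_iff] at hd
      simp only [PTerm.val]
      rw [auxT φ w w' L hL hw hw' hC h0 t₁ hd.1 (fun π h => hs π (by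
          simp only [PTerm.subs, List.mem_append]; exact Or.inl h)),
        auxT φ w w' L hL hw hw' hC h0 t₂ hd.2 (fun π h => hs π (by
          simp only [PTerm.subs, List.mem_append]; exact Or.inr h))]
  | .one, _, _ => rfl

theorem auxF (φ : PFormula σ) (w w' : List σ) (L : ℕ) (hL : 1 ≤ L)
    (hw : w.length = L) (hw' : w'.length = L)
    (hC : ∀ ψ : PFormula σ, ψ.depth = 0 →
      (∀ π, PFormula.pnp π ∈ ψ.subs → PFormula.pnp π ∈ φ.subs) →
      ((List.range L).filter (fun j => ψ.sat w j)).length =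
      ((List.range L).filter (fun j => ψ.sat w' j)).length)
    (h0 : ∀ ψ : PFormula σ, ψ.depth = 0 →
      (∀ π, PFormula.pnp π ∈ ψ.subs → PFormula.pnp π ∈ φ.subs) →
      ψ.sat w (L-1) = ψ.sat w' (L-1)) :
    ∀ ψ : PFormula σ, ψ.depth ≤ 1 →
      (∀ π, PFormula.pnp π ∈ ψ.subs → PFormula.pnp π ∈ φ.subs) →
      ψ.sat w (L-1) = ψ.sat w' (L-1)
  | .sym c, _, hs => h0 (.sym c) rfl hs
  | .pnp π, _, hs => h0 (.pnp π) rfl hs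
  | .lt t₁ t₂, hd, hs => by
      simp only [PFormula.depth, max_le_iff] at hd
      simp only [PFormula.sat]
      rw [auxT φ w w' L hL hw hw' hC h0 t₁ hd.1 (fun π h => hs π (by
          simp only [PFormula.subs, List.mem_cons, List.mem_append]
          exact Or.inr (Or.inl h))),
        auxT φ w w' L hL hw hw' hC h0 t₂ hd.2 (fun π h => hs π (by
          simp only [PFormula.subs, List.mem_cons, List.mem_append]
          exact Or.inr (Or.inr h)))]
  | .not ψ, hd, hs => by
      have hd' : ψ.depth ≤ 1 := by simpa [PFormula.depth] using hd
      simp only [PFormula.sat]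
      rw [auxF φ w w' L hL hw hw' hC h0 ψ hd' (fun π h => hs π (by
          simp only [PFormula.subs, List.mem_cons]; exact Or.inr h))]
  | .and ψ₁ ψ₂, hd, hs => by
      simp only [PFormula.depth, max_le_iff] at hd
      simp only [PFormula.sat]
      rw [auxF φ w w' L hL hw hw' hC h0 ψ₁ hd.1 (fun π h => hs π (by
          simp only [PFormula.subs, List.mem_cons, List.mem_append]
          exact Or.inr (Or.inl h))),
        auxF φ w w' L hL hw hw' hC h0 ψ₂ hd.2 (fun π h => hs π (by
          simp only [PFormula.subs, List.mem_cons, List.mem_append]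
          exact Or.inr (Or.inr h)))]
end

theorem bool_eq {x y : Bool} (h : (x = true) ↔ (y = true)) : x = y := by
  cases x <;> cases y <;> simp_all

end StmtAux


/-- Commutativity of depth 1: for any depth-1 formula `φ` of TL[#←,#→,PNP]
(in particular, of TL[#←,PNP]) and any affix restriction `(λ, ϱ)` with `|ϱ(n)| ≥ 1`
for all `n`, if all PNPs occurring in `φ` are constant on the middle of `(λ, ϱ)`,
then the language defined by `φ` is commutative on the middle of `(λ, ϱ)`. -/
theorem stmt4 (σ : Type) [Fintype σ] [DecidableEq σ] (φ : PFormula σ)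
    (hdep : φ.depth ≤ 1) (lam rho : (σ → ℕ) → List σ)
    (hrho : ∀ n : σ → ℕ, 1 ≤ (rho n).length)
    (hpnp : ∀ π ∈ φ.pnps, ConstantOn (PFormula.pnp π) (middle lam rho)) :
    CommutativeOnMiddle φ.lang lam rho := by
  intro w w' hwA hw'A hpar
  obtain ⟨u, hw⟩ := hwA
  obtain ⟨u', hw'⟩ := hw'A
  rw [← hpar] at hw'
  set a := lam (parikh w) with ha
  set r := rho (parikh w) with hr
  have hperm : w.Perm w' := List.perm_iff_count.mpr (fun c => congrFun hpar c)
  set L := w.length with hLdef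
  have hw'len : w'.length = L := hperm.length_eq.symm
  have hR : 1 ≤ r.length := by rw [hr]; exact hrho (parikh w)
  have hwlen : L = a.length + u.length + r.length := by
    rw [hLdef, hw]; simp [List.length_append]; omega
  have hu'len : u'.length = u.length := by
    have h1 := hw'len
    rw [hw'] at h1; simp [List.length_append] at h1; omega
  have hL : 1 ≤ L := by omega
  have huperm : u.Perm u' := by
    rw [List.perm_iff_count]
    intro c
    have h1 : List.count c w = List.count c w' := congrFun hpar c
    rw [hw, hw'] at h1
    simp only [List.count_append] at h1
    omega
  -- last-position equality for depth-0 formulas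
  have hlast : ∀ ψ : PFormula σ, ψ.depth = 0 →
      (∀ π, PFormula.pnp π ∈ ψ.subs → PFormula.pnp π ∈ φ.subs) →
      ψ.sat w (L-1) = ψ.sat w' (L-1) := by
    intro ψ hd _
    apply StmtAux.sat_congr ψ hd
    · rw [hw, hw',
        List.getElem?_append_right (l₁ := a ++ u) (by simp [List.length_append]; omega),
        List.getElem?_append_right (l₁ := a ++ u') (by simp [List.length_append]; omega)]
      simp [List.length_append, hu'len]
    · intro π _; rw [hpar]
  -- counting equality for depth-0 formulas
  have hcount : ∀ ψ : PFormula σ, ψ.depth = 0 →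
      (∀ π, PFormula.pnp π ∈ ψ.subs → PFormula.pnp π ∈ φ.subs) →
      ((List.range L).filter (fun j => ψ.sat w j)).length =
      ((List.range L).filter (fun j => ψ.sat w' j)).length := by
    intro ψ hd hs
    rw [StmtAux.filter_range_len, StmtAux.filter_range_len]
    have split : ∀ v : List σ, (∑ j ∈ Finset.range L, if ψ.sat v j then 1 else 0) =
        ((∑ j ∈ Finset.Ico 0 a.length, if ψ.sat v j then 1 else 0)
        + ∑ j ∈ Finset.Ico a.length (a.length + u.length), if ψ.sat v j then 1 else 0)
        + ∑ j ∈ Finset.Ico (a.length + u.length) L, if ψ.sat v j then 1 else 0 := by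
      intro v
      rw [Finset.range_eq_Ico,
        ← Finset.sum_Ico_consecutive _ (show 0 ≤ a.length + u.length by omega)
          (show a.length + u.length ≤ L by omega),
        ← Finset.sum_Ico_consecutive _ (show 0 ≤ a.length by omega)
          (show a.length ≤ a.length + u.length by omega)]
    rw [split w, split w']
    congr 1
    · congr 1
      · -- prefix part
        apply Finset.sum_congr rfl
        intro j hj
        simp only [Finset.mem_Ico] at hj
        have hview : ∀ (x y : List σ), ((a ++ x) ++ y)[j]? = a[j]? := by
          intro x y
          rw [List.getElem?_append_left (by simp [List.length_append]; omega),
            List.getElem?_append_left hj.2]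
        have hsc : ψ.sat w j = ψ.sat w' j := by
          apply StmtAux.sat_congr ψ hd
          · rw [hw, hw', hview u r, hview u' r]
          · intro π _; rw [hpar]
        rw [hsc]
      · -- middle part
        by_cases hM : u.length = 0
        · rw [show a.length + u.length = a.length by omega]
          simp
        · set V : ((σ → ℕ) → ℕ → Bool) → Bool := fun π => π (parikh w) a.length with hV
          have hmid : ∀ (v uu : List σ), v = a ++ uu ++ r → parikh v = parikh w →
              uu.length = u.length →
              ∀ j, a.length ≤ j → j < a.length + u.length →
              ψ.sat v j = StmtAux.pevalF V v[j]? ψ := by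
            intro v uu hv hpv huu j h1 h2
            apply StmtAux.sat_depth0 ψ hd
            intro π hπ
            have hcon := hpnp π (hs π hπ)
            have hvlen : v.length = L := by
              rw [hv]; simp [List.length_append]; omega
            have m1 : parikh (v.take (j+1)) ∈ intervalSet (middle lam rho (parikh w)) := by
              have hm := StmtAux.mem_mid a uu r j h1 (by omega)
              rw [← hv, hpv] at hm
              simp only [intervalSet, middle]
              rw [← ha, ← hr]
              exact hm
            have m2 : parikh (v.take (a.length+1)) ∈
                intervalSet (middle lam rho (parikh w)) := by
              have hm := StmtAux.mem_mid a uu r a.length le_rfl (by omega)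
              rw [← hv, hpv] at hm
              simp only [intervalSet, middle]
              rw [← ha, ← hr]
              exact hm
            have h3 := hcon (parikh w) v v hpv hpv j a.length (by omega) (by omega) m1 m2
            simp only [PFormula.sat] at h3
            show π (parikh v) j = V π
            rw [hV, hpv]
            rw [hpv] at h3
            exact StmtAux.bool_eq h3
          have hmain : ∀ (v uu : List σ), v = a ++ uu ++ r → parikh v = parikh w →
              uu.length = u.length →
              (∑ j ∈ Finset.Ico a.length (a.length + u.length), if ψ.sat v j then 1 else 0)
              = List.countP (fun c => StmtAux.pevalF V (some c) ψ) uu := by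
            intro v uu hv hpv huu
            rw [Finset.sum_Ico_eq_sum_range,
              show a.length + u.length - a.length = uu.length by omega,
              ← StmtAux.sum_getElem? (fun s => StmtAux.pevalF V s ψ) uu]
            apply Finset.sum_congr rfl
            intro k hk
            simp only [Finset.mem_range] at hk
            have e1 : v[a.length + k]? = uu[k]? := by
              rw [hv, List.append_assoc,
                List.getElem?_append_right (l₁ := a) (by omega)]
              simp only [Nat.add_sub_cancel_left]
              rw [List.getElem?_append_left (by omega)]
            rw [hmid v uu hv hpv huu (a.length+k) (by omega) (by omega), e1]
          rw [hmain w u hw rfl rfl, hmain w' u' hw' hpar.symm hu'len]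
          exact List.Perm.countP_eq _ huperm
    · -- suffix part
      apply Finset.sum_congr rfl
      intro j hj
      simp only [Finset.mem_Ico] at hj
      have hsc : ψ.sat w j = ψ.sat w' j := by
        apply StmtAux.sat_congr ψ hd
        · rw [hw, hw',
            List.getElem?_append_right (l₁ := a ++ u) (by simp [List.length_append]; omega),
            List.getElem?_append_right (l₁ := a ++ u') (by simp [List.length_append]; omega)]
          simp [List.length_append, hu'len]
        · intro π _; rw [hpar]
      rw [hsc]
  have hsat := StmtAux.auxF φ w w' L hL hLdef.symm hw'len hcount hlast φ hdep (fun π h => h)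
  have hne : w ≠ [] := by
    intro h; rw [h] at hLdef; simp at hLdef; omega
  have hne' : w' ≠ [] := by
    intro h; rw [h] at hw'len; simp at hw'len; omega
  simp only [PFormula.lang, Set.mem_setOf_eq]
  rw [show w.length - 1 = L - 1 from by rw [← hLdef],
    show w'.length - 1 = L - 1 from by rw [hw'len], hsat]
  simp [hne, hne']
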